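/- arXiv:1201.6441 — 2 statements merged into one kernel-verified Lean document; each statement's English description precedes it below -/
import Mathlib

section
/- The matrix P* is a stochastic matrix: all its entries are nonnegative (indeed P*(0,0) = Σ_{i=0}^r λ_i − Σ_{i=1}^r γ_i > 0) and each row sums to 1; moreover π* satisfies the detailed balance equations π*(i) P*(i,j) = π*(j) P*(j,i) for all i, j, and consequently π* P* = π*, so π* is the stationary distribution of the ergodic star chain with transition matrix P*. -/
open Matrix

noncomputable def rho (γ lam : ℕ → ℝ) (i : ℕ) : ℝ := (1 - γ i) / (1 - lam i)

noncomputable def pistar (γ lam : ℕ → ℝ) (k i : ℕ) : ℝ :=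
  if i = 0 then ∏ j ∈ Finset.Icc 1 k, rho γ lam j
  else if i ≤ k then
    (1 - rho γ lam i) *
      ∏ j ∈ (Finset.Icc 1 k).erase i, ((1 - γ j - rho γ lam j * (1 - γ i)) / (γ i - γ j))
  else 0

noncomputable def Pstar (r : ℕ) (γ lam : ℕ → ℝ) : Matrix (Fin (r + 1)) (Fin (r + 1)) ℝ :=
  Matrix.of fun i j =>
    if i.val = 0 then
      (if j.val = 0 then
        1 - (∑ l ∈ Finset.Icc 1 r, (1 - γ l) * pistar γ lam r l) / pistar γ lam r 0
      else (1 - γ j.val) * pistar γ lam r j.val / pistar γ lam r 0)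
    else if j = i then γ i.val
    else if j.val = 0 then 1 - γ i.val
    else 0

/-!
Write `s = {1, …, r}`. The identity `1 - γ_j - ρ_j (1 - g) = ρ_j (g - λ_j)` gives, for `i ∈ s`,
`(1 - γ_i) π*(i) = π*(0) ∏_{j ∈ s} (γ_i - λ_j) / ∏_{j ∈ s, j ≠ i} (γ_i - γ_j)`.
Summed over `i`, the right-hand side is `π*(0)` times the coefficient of `X^(r-1)` in
`∏ (X - λ_j) - ∏ (X - γ_j)`, read off by Lagrange interpolation at the nodes `γ_i`. Hence
`Σ_i (1 - γ_i) π*(i) = π*(0) Σ_i (γ_i - λ_i)`, and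
`P*(0,0) = 1 - Σ_i (γ_i - λ_i) = λ_r + Σ_i (λ_{i-1} - γ_i) > 0`.
Interlacing makes every factor of `π*(i)` positive. The only transitions between distinct
states are along the edges `0 — i` of the star, where detailed balance is the definition of
`P*(0,i)`; detailed balance together with unit row sums gives stationarity.
-/

open Finset Polynomial Lagrange

theorem Lagrange.sum_prod_sub_div_prod_erase_sub {F ι : Type*} [Field F] [DecidableEq ι]
    {s : Finset ι} {v : ι → F} (hvs : Set.InjOn v s) (w : ι → F) :
    ∑ i ∈ s, (∏ j ∈ s, (v i - w j)) / ∏ j ∈ s.erase i, (v i - v j) = ∑ i ∈ s, (v i - w i) := by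
  rcases s.eq_empty_or_nonempty with rfl | hs
  · simp
  have hdeg : (nodal s w - nodal s v).degree < #s :=
    calc _ < (nodal s w).degree := degree_sub_lt_left (by simp) nodal_ne_zero
          (by rw [nodal_monic.leadingCoeff, nodal_monic.leadingCoeff])
      _ = #s := degree_nodal
  calc ∑ i ∈ s, (∏ j ∈ s, (v i - w j)) / ∏ j ∈ s.erase i, (v i - v j)
      = ∑ i ∈ s, (nodal s w - nodal s v).eval (v i) / ∏ j ∈ s.erase i, (v i - v j) :=
        sum_congr rfl fun i hi => by rw [eval_sub, eval_nodal_at_node hi, sub_zero, eval_nodal]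
    _ = (nodal s w - nodal s v).coeff (#s - 1) := (coeff_eq_sum hvs hdeg).symm
    _ = ∑ i ∈ s, (v i - w i) := by
        rw [coeff_sub, nodal_eq, nodal_eq, prod_X_sub_C_coeff_card_pred _ _ hs.card_pos,
          prod_X_sub_C_coeff_card_pred _ _ hs.card_pos, sum_sub_distrib]
        ring

theorem Matrix.vecMul_eq_self_of_detailed_balance {n R : Type*} [Fintype n] [CommSemiring R]
    {M : Matrix n n R} {π : n → R} (hbal : ∀ i j, π i * M i j = π j * M j i)
    (hrow : ∀ i, ∑ j, M i j = 1) : π ᵥ* M = π := by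
  ext j
  rw [vecMul, dotProduct, sum_congr rfl fun i _ => hbal i j, ← mul_sum, hrow, mul_one]

theorem Finset.sum_range_succ_eq_sum_Icc {M : Type*} [AddCommMonoid M] (f : ℕ → M) (r : ℕ) :
    ∑ k ∈ range r, f (k + 1) = ∑ l ∈ Icc 1 r, f l := by
  rw [range_eq_Ico, sum_Ico_add', zero_add, Ico_add_one_right_eq_Icc]

theorem one_sub_sub_rho_mul {γ lam : ℕ → ℝ} {j : ℕ} (hj : lam j ≠ 1) (g : ℝ) :
    1 - γ j - rho γ lam j * (1 - g) = rho γ lam j * (g - lam j) := by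
  have hρ : rho γ lam j * (1 - lam j) = 1 - γ j := div_mul_cancel₀ _ (sub_ne_zero.2 hj.symm)
  linear_combination -hρ

theorem rho_pos {γ lam : ℕ → ℝ} {i : ℕ} (hγ : γ i < 1) (hlam : lam i < 1) :
    0 < rho γ lam i :=
  div_pos (sub_pos.2 hγ) (sub_pos.2 hlam)

theorem rho_lt_one {γ lam : ℕ → ℝ} {i : ℕ} (hlam : lam i < γ i) (hlam1 : lam i < 1) :
    rho γ lam i < 1 :=
  (div_lt_one (sub_pos.2 hlam1)).2 (by linarith)

section pistar

variable {γ lam : ℕ → ℝ} {k : ℕ}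

theorem pistar_zero : pistar γ lam k 0 = ∏ j ∈ Icc 1 k, rho γ lam j := if_pos rfl

theorem pistar_of_mem (hlam : ∀ j ∈ Icc 1 k, lam j ≠ 1) {i : ℕ} (hi : i ∈ Icc 1 k) :
    pistar γ lam k i = (1 - rho γ lam i) *
      ∏ j ∈ (Icc 1 k).erase i, rho γ lam j * ((γ i - lam j) / (γ i - γ j)) := by
  obtain ⟨hi1, hik⟩ := mem_Icc.1 hi
  rw [pistar, if_neg (by omega), if_pos hik]
  congr 1
  refine prod_congr rfl fun j hj => ?_
  rw [one_sub_sub_rho_mul (hlam j (mem_of_mem_erase hj)), mul_div_assoc]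

theorem one_sub_mul_pistar (hlam : ∀ j ∈ Icc 1 k, lam j ≠ 1) {i : ℕ} (hi : i ∈ Icc 1 k) :
    (1 - γ i) * pistar γ lam k i = pistar γ lam k 0 *
      ((∏ j ∈ Icc 1 k, (γ i - lam j)) / ∏ j ∈ (Icc 1 k).erase i, (γ i - γ j)) := by
  have hii : (1 - γ i) * (1 - rho γ lam i) = rho γ lam i * (γ i - lam i) := by
    linear_combination one_sub_sub_rho_mul (γ := γ) (hlam i hi) (γ i)
  rw [pistar_of_mem hlam hi, pistar_zero, prod_mul_distrib, prod_div_distrib,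
    ← mul_prod_erase _ _ hi, ← mul_prod_erase (Icc 1 k) (fun j => γ i - lam j) hi]
  linear_combination (∏ j ∈ (Icc 1 k).erase i, rho γ lam j) *
    ((∏ j ∈ (Icc 1 k).erase i, (γ i - lam j)) / ∏ j ∈ (Icc 1 k).erase i, (γ i - γ j)) * hii

theorem sum_one_sub_mul_pistar (hlam : ∀ j ∈ Icc 1 k, lam j ≠ 1)
    (hγ : Set.InjOn γ (Icc 1 k : Finset ℕ)) :
    ∑ i ∈ Icc 1 k, (1 - γ i) * pistar γ lam k i =
      pistar γ lam k 0 * ∑ i ∈ Icc 1 k, (γ i - lam i) := by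
  rw [sum_congr rfl fun i hi => one_sub_mul_pistar hlam hi, ← mul_sum,
    sum_prod_sub_div_prod_erase_sub hγ]

end pistar

section Pstar

variable {r : ℕ} {γ lam : ℕ → ℝ}

theorem Pstar_zero_zero : Pstar r γ lam 0 0 =
    1 - (∑ l ∈ Icc 1 r, (1 - γ l) * pistar γ lam r l) / pistar γ lam r 0 := by
  simp [Pstar]

theorem Pstar_zero_apply {j : Fin (r + 1)} (hj : j ≠ 0) :
    Pstar r γ lam 0 j = (1 - γ j) * pistar γ lam r j / pistar γ lam r 0 := by
  simp [Pstar, hj]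

theorem Pstar_apply_of_ne_zero {i : Fin (r + 1)} (hi : i ≠ 0) (j : Fin (r + 1)) :
    Pstar r γ lam i j = (if j = i then γ i else 0) + (if j = 0 then 1 - γ i else 0) := by
  by_cases hji : j = i
  · subst hji
    simp [Pstar, hi]
  · rcases eq_or_ne j 0 with rfl | hj
    · simp [Pstar, hi, hi.symm]
    · simp [Pstar, hi, hji, hj]

theorem sum_Pstar_row (i : Fin (r + 1)) : ∑ j, Pstar r γ lam i j = 1 := by
  rcases eq_or_ne i 0 with rfl | hi
  · simp_rw [Fin.sum_univ_succ, Pstar_zero_zero, Pstar_zero_apply (Fin.succ_ne_zero _),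
      Fin.val_succ]
    rw [← sum_div,
      Fin.sum_univ_eq_sum_range (fun k => (1 - γ (k + 1)) * pistar γ lam r (k + 1)),
      sum_range_succ_eq_sum_Icc (fun k => (1 - γ k) * pistar γ lam r k)]
    ring
  · simp [Pstar_apply_of_ne_zero hi, sum_add_distrib]

theorem pistar_mul_Pstar_comm (hπ : pistar γ lam r 0 ≠ 0) (i j : Fin (r + 1)) :
    pistar γ lam r i * Pstar r γ lam i j = pistar γ lam r j * Pstar r γ lam j i := by
  have hstar : ∀ j : Fin (r + 1), j ≠ 0 →
      pistar γ lam r 0 * Pstar r γ lam 0 j = pistar γ lam r j * Pstar r γ lam j 0 := by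
    intro j hj
    rw [Pstar_zero_apply hj, Pstar_apply_of_ne_zero hj, if_neg hj.symm, if_pos rfl, zero_add]
    field_simp
  rcases eq_or_ne i 0 with rfl | hi <;> rcases eq_or_ne j 0 with rfl | hj
  · rfl
  · exact hstar j hj
  · exact (hstar i hi).symm
  · rcases eq_or_ne i j with rfl | hij
    · rfl
    · simp [Pstar_apply_of_ne_zero hi, Pstar_apply_of_ne_zero hj, hi, hj, hij, hij.symm]

end Pstar

def IsInterlacing (r : ℕ) (γ lam : ℕ → ℝ) : Prop :=
  ∀ i : ℕ, 1 ≤ i → i ≤ r → lam (i - 1) > γ i ∧ γ i > lam i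

namespace IsInterlacing

variable {r : ℕ} {γ lam : ℕ → ℝ}

theorem lam_le_lam (h : IsInterlacing r γ lam) {i j : ℕ} (hij : i ≤ j) (hj : j ≤ r) :
    lam j ≤ lam i := by
  induction j, hij using Nat.le_induction with
  | base => rfl
  | succ n hin ih =>
    have hn := h (n + 1) (by omega) hj
    rw [Nat.add_sub_cancel] at hn
    linarith [ih (by omega)]

theorem gamma_lt_lam (h : IsInterlacing r γ lam) {i j : ℕ} (hji : j < i) (hi : i ≤ r) :
    γ i < lam j :=
  (h i (by omega) hi).1.trans_le (h.lam_le_lam (by omega) (by omega))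

theorem lam_lt_gamma (h : IsInterlacing r γ lam) {i : ℕ} (hi : i ∈ Icc 1 r) : lam i < γ i :=
  (h i (mem_Icc.1 hi).1 (mem_Icc.1 hi).2).2

theorem strictAntiOn_gamma (h : IsInterlacing r γ lam) : StrictAntiOn γ (Set.Icc 1 r) :=
  fun i hi _ hj hij => (h.gamma_lt_lam hij hj.2).trans (h.lam_lt_gamma (by simpa using hi))

theorem injOn_gamma (h : IsInterlacing r γ lam) : Set.InjOn γ (Icc 1 r : Finset ℕ) := by
  rw [coe_Icc]
  exact h.strictAntiOn_gamma.injOn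

theorem gamma_lt_one (h : IsInterlacing r γ lam) (h0 : lam 0 = 1) {i : ℕ} (hi : i ∈ Icc 1 r) :
    γ i < 1 :=
  h0 ▸ h.gamma_lt_lam (mem_Icc.1 hi).1 (mem_Icc.1 hi).2

theorem lam_lt_one (h : IsInterlacing r γ lam) (h0 : lam 0 = 1) {i : ℕ} (hi : i ∈ Icc 1 r) :
    lam i < 1 :=
  (h.lam_lt_gamma hi).trans (h.gamma_lt_one h0 hi)

theorem gamma_pos (h : IsInterlacing r γ lam) (hr : 0 ≤ lam r) {i : ℕ} (hi : i ∈ Icc 1 r) :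
    0 < γ i :=
  (hr.trans (h.lam_le_lam (mem_Icc.1 hi).2 le_rfl)).trans_lt (h.lam_lt_gamma hi)

theorem gamma_sub_lam_div_gamma_sub_gamma_pos (h : IsInterlacing r γ lam) {i j : ℕ}
    (hi : i ∈ Icc 1 r) (hj : j ∈ Icc 1 r) (hji : j ≠ i) : 0 < (γ i - lam j) / (γ i - γ j) := by
  rcases hji.lt_or_gt with hji | hij
  · exact div_pos_of_neg_of_neg (by linarith [h.gamma_lt_lam hji (mem_Icc.1 hi).2])
      (by linarith [h.strictAntiOn_gamma (by simpa using hj) (by simpa using hi) hji])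
  · have hγ := h.strictAntiOn_gamma (by simpa using hi) (by simpa using hj) hij
    exact div_pos (by linarith [h.lam_lt_gamma hj]) (by linarith)

theorem sum_lam_sub_sum_gamma_pos (h : IsInterlacing r γ lam) (h0 : lam 0 = 1)
    (hr : 0 ≤ lam r) :
    0 < ∑ i ∈ range (r + 1), lam i - ∑ i ∈ Icc 1 r, γ i := by
  rcases r with _ | r
  · simp [h0]
  have hpos : 0 < ∑ k ∈ range (r + 1), (lam k - γ (k + 1)) :=
    sum_pos (fun k hk => sub_pos.2 (h.gamma_lt_lam (by omega) (by simpa using hk)))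
      nonempty_range_add_one
  rw [sum_sub_distrib] at hpos
  rw [sum_range_succ, ← sum_range_succ_eq_sum_Icc]
  linarith

theorem pistar_zero_pos (h : IsInterlacing r γ lam) (h0 : lam 0 = 1) :
    0 < pistar γ lam r 0 := by
  rw [pistar_zero]
  exact prod_pos fun j hj => rho_pos (h.gamma_lt_one h0 hj) (h.lam_lt_one h0 hj)

theorem pistar_pos (h : IsInterlacing r γ lam) (h0 : lam 0 = 1) {i : ℕ} (hi : i ∈ Icc 1 r) :
    0 < pistar γ lam r i := by
  rw [pistar_of_mem (fun j hj => (h.lam_lt_one h0 hj).ne) hi]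
  refine mul_pos (sub_pos.2 (rho_lt_one (h.lam_lt_gamma hi) (h.lam_lt_one h0 hi)))
    (prod_pos fun j hj => ?_)
  have hj' := mem_of_mem_erase hj
  exact mul_pos (rho_pos (h.gamma_lt_one h0 hj') (h.lam_lt_one h0 hj'))
    (h.gamma_sub_lam_div_gamma_sub_gamma_pos hi hj' (ne_of_mem_erase hj))

theorem Pstar_zero_zero_eq (h : IsInterlacing r γ lam) (h0 : lam 0 = 1) :
    Pstar r γ lam 0 0 = ∑ i ∈ range (r + 1), lam i - ∑ i ∈ Icc 1 r, γ i := by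
  rw [Pstar_zero_zero, sum_one_sub_mul_pistar (fun j hj => (h.lam_lt_one h0 hj).ne)
      h.injOn_gamma, mul_div_cancel_left₀ _ (h.pistar_zero_pos h0).ne', sum_sub_distrib,
    sum_range_succ', sum_range_succ_eq_sum_Icc lam, h0]
  ring

theorem Pstar_nonneg (h : IsInterlacing r γ lam) (h0 : lam 0 = 1) (hr : 0 ≤ lam r)
    (i j : Fin (r + 1)) : 0 ≤ Pstar r γ lam i j := by
  have hmem : ∀ i : Fin (r + 1), i ≠ 0 → (i : ℕ) ∈ Icc 1 r := fun i hi =>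
    mem_Icc.2 ⟨Nat.one_le_iff_ne_zero.2 (Fin.val_ne_zero_iff.2 hi), Nat.lt_succ_iff.1 i.isLt⟩
  rcases eq_or_ne i 0 with rfl | hi
  · rcases eq_or_ne j 0 with rfl | hj
    · rw [h.Pstar_zero_zero_eq h0]
      exact (h.sum_lam_sub_sum_gamma_pos h0 hr).le
    · rw [Pstar_zero_apply hj]
      have hj' := hmem j hj
      exact div_nonneg (mul_nonneg (sub_nonneg.2 (h.gamma_lt_one h0 hj').le)
        (h.pistar_pos h0 hj').le) (h.pistar_zero_pos h0).le
  · have hi' := hmem i hi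
    have hγ0 := h.gamma_pos hr hi'
    have hγ1 := h.gamma_lt_one h0 hi'
    rw [Pstar_apply_of_ne_zero hi]
    split_ifs <;> linarith

end IsInterlacing

theorem stmt8_general (r : ℕ) (γ lam : ℕ → ℝ)
    (hlam0 : lam 0 = 1)
    (hinter : ∀ i : ℕ, 1 ≤ i → i ≤ r → lam (i - 1) > γ i ∧ γ i > lam i)
    (hlamr : 0 ≤ lam r) :
    (Pstar r γ lam 0 0 = (∑ i ∈ Finset.range (r + 1), lam i) - ∑ i ∈ Finset.Icc 1 r, γ i) ∧
    (0 < Pstar r γ lam 0 0) ∧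
    (∀ i j, 0 ≤ Pstar r γ lam i j) ∧
    (∀ i, ∑ j, Pstar r γ lam i j = 1) ∧
    (∀ i j : Fin (r + 1),
      pistar γ lam r i.val * Pstar r γ lam i j = pistar γ lam r j.val * Pstar r γ lam j i) ∧
    ((fun i : Fin (r + 1) => pistar γ lam r i.val) ᵥ* Pstar r γ lam
      = fun i : Fin (r + 1) => pistar γ lam r i.val) := by
  have h : IsInterlacing r γ lam := hinter
  have hP00 := h.Pstar_zero_zero_eq hlam0
  have hbal := pistar_mul_Pstar_comm (h.pistar_zero_pos hlam0).ne'
  exact ⟨hP00, hP00 ▸ h.sum_lam_sub_sum_gamma_pos hlam0 hlamr, h.Pstar_nonneg hlam0 hlamr,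
    sum_Pstar_row, hbal, vecMul_eq_self_of_detailed_balance hbal sum_Pstar_row⟩

/-- `P*` is a stochastic matrix (with
`P*(0,0) = Σ_{i=0}^r λ_i − Σ_{i=1}^r γ_i > 0`), `π*` satisfies detailed balance with
respect to `P*`, and consequently `π* P* = π*`. -/
theorem stmt8 (r : ℕ) (hr : 1 ≤ r) (γ lam : ℕ → ℝ)
    (hlam0 : lam 0 = 1)
    (hinter : ∀ i : ℕ, 1 ≤ i → i ≤ r → lam (i - 1) > γ i ∧ γ i > lam i)
    (hlamr : 0 ≤ lam r) :
    (Pstar r γ lam 0 0 = (∑ i ∈ Finset.range (r + 1), lam i) - ∑ i ∈ Finset.Icc 1 r, γ i) ∧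
    (0 < Pstar r γ lam 0 0) ∧
    (∀ i j, 0 ≤ Pstar r γ lam i j) ∧
    (∀ i, ∑ j, Pstar r γ lam i j = 1) ∧
    (∀ i j : Fin (r + 1),
      pistar γ lam r i.val * Pstar r γ lam i j = pistar γ lam r j.val * Pstar r γ lam j i) ∧
    ((fun i : Fin (r + 1) => pistar γ lam r i.val) ᵥ* Pstar r γ lam
      = fun i : Fin (r + 1) => pistar γ lam r i.val) :=
  stmt8_general r γ lam hlam0 hinter hlamr
end

section
/- Let Λ₂ be the (r+1)-by-(r+1) matrix whose 0th row is δ_0 and whose ith row is ν_i for i = 1,…,r. Then Λ₂ is a stochastic matrix and: Λ₂ P*_abs = P̂ Λ₂; π* = π̂ Λ₂; and Λ₂ δ_0ᵀ = δ_0ᵀ (i.e., Λ₂(0,0) = 1 and Λ₂(i,0) = 0 for i ≥ 1). Thus (π*, P*_abs) and (π̂, P̂) are intertwined by the link Λ₂. -/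
open Matrix

/-- `P*` with row `0` replaced by `δ_0` (state `0` made absorbing). -/
noncomputable def PstarAbs (r : ℕ) (γ lam : ℕ → ℝ) : Matrix (Fin (r + 1)) (Fin (r + 1)) ℝ :=
  Matrix.updateRow (Pstar r γ lam) 0 (fun j => if j = 0 then 1 else 0)

/-- The row vector `ν_i ∈ ℝ^{r+1}`. -/
noncomputable def nuvec (γ lam : ℕ → ℝ) (i j : ℕ) : ℝ :=
  if 1 ≤ j ∧ j ≤ i then (1 - γ i) * pistar γ lam i j / (1 - γ i - rho γ lam i * (1 - γ j))
  else 0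

/-- The row vector `π̂_k ∈ ℝ^{r+1}`. -/
noncomputable def pihat (γ lam : ℕ → ℝ) (k j : ℕ) : ℝ :=
  if j = 0 then ∏ i ∈ Finset.Icc 1 k, rho γ lam i
  else if j < k then (∏ i ∈ Finset.Icc (j + 1) k, rho γ lam i) * (1 - rho γ lam j)
  else if j = k then 1 - rho γ lam k
  else 0

/-- The dual transition matrix `P̂`. -/
noncomputable def PhatM (r : ℕ) (γ lam : ℕ → ℝ) : Matrix (Fin (r + 1)) (Fin (r + 1)) ℝ :=
  Matrix.of fun i j =>
    if i.val = 0 then (if j.val = 0 then 1 else 0)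
    else if j = i then γ i.val
    else if j.val < i.val then (1 - γ i.val) * pihat γ lam (i.val - 1) j.val
    else 0

/-- The matrix `Λ₂` whose `0`th row is `δ_0` and whose `i`th row is `ν_i` for
`i = 1,…,r`. -/
noncomputable def Lambda2 (r : ℕ) (γ lam : ℕ → ℝ) : Matrix (Fin (r + 1)) (Fin (r + 1)) ℝ :=
  Matrix.of fun i j =>
    if i.val = 0 then (if j.val = 0 then 1 else 0) else nuvec γ lam i.val j.val

/-!
The vectors `π̂_k` obey `π̂_{k+1} = ρ_{k+1} π̂_k + (1 - ρ_{k+1}) δ_{k+1}`, and the product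
formula for `π*_k` gives the same recursion `π*_{k+1} = ρ_{k+1} π*_k + (1 - ρ_{k+1}) ν_{k+1}`
with `ν_{k+1}` in place of `δ_{k+1}`; as row `k` of `Λ₂` is `ν_k`, induction on `k` gives
`π̂_k Λ₂ = π*_k`. Row `i ≥ 1` of `P̂` is `γ_i δ_i + (1 - γ_i) π̂_{i-1}`, so
`(P̂ Λ₂)_i = γ_i ν_i + (1 - γ_i) π*_{i-1}`. This is `ν_i P*_abs`: off column `0` it reads
`ν_i(j) (γ_j - γ_i) = (1 - γ_i) π*_{i-1}(j)`, and column `0` follows because `ν_i` and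
`π*_{i-1}` both sum to one. That `π*_k` sums to one is Lagrange interpolation of
`∏ (x - λ_l) - ∏ (x - γ_l)` at the nodes `γ_l`, evaluated at `x = 1`, since
`1 - γ_l - ρ_l (1 - x) = ρ_l (x - λ_l)`.
-/

open Finset

open Polynomial Lagrange in
theorem prod_sub_sub_prod_sub_eq_sum {F ι : Type*} [Field F] [DecidableEq ι] {s : Finset ι}
    {v : ι → F} (hvs : Set.InjOn v s) (u : ι → F) (x : F) :
    ∏ i ∈ s, (x - u i) - ∏ i ∈ s, (x - v i)
      = ∑ j ∈ s, (∏ i ∈ s, (v j - u i)) * ∏ i ∈ s.erase j, ((x - v i) / (v j - v i)) := by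
  have hdeg : (nodal s u - nodal s v).degree < #s := by
    rw [← degree_nodal (v := u)]
    exact degree_sub_lt_left (by simp only [degree_nodal]) nodal_ne_zero
      (by simp only [nodal_monic.leadingCoeff])
  have := congrArg (eval x) (eq_interpolate hvs hdeg)
  simp only [eval_sub, eval_nodal, interpolate_apply, eval_finsetSum, eval_mul, eval_C,
    Lagrange.basis, eval_prod, basisDivisor, eval_X] at this
  rw [this]
  refine sum_congr rfl fun j hj => ?_
  rw [show ∏ i ∈ s, (v j - v i) = 0 from prod_eq_zero hj (sub_self _), sub_zero]
  simp only [div_eq_inv_mul]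

theorem sum_range_succ_eq_add_sum_Icc {M : Type*} [AddCommMonoid M] (f : ℕ → M) (n : ℕ) :
    ∑ j ∈ range (n + 1), f j = f 0 + ∑ j ∈ Icc 1 n, f j := by
  rw [range_eq_Ico, sum_eq_sum_Ico_succ_bot (Nat.succ_pos n), zero_add,
    Nat.succ_eq_add_one, Ico_add_one_right_eq_Icc]

structure Interlacing (r : ℕ) (γ lam : ℕ → ℝ) : Prop where
  lam_zero : lam 0 = 1
  interlace : ∀ i, 1 ≤ i → i ≤ r → lam (i - 1) > γ i ∧ γ i > lam i

section

variable {γ lam : ℕ → ℝ}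

theorem pistar_zero_right (k : ℕ) : pistar γ lam k 0 = ∏ l ∈ Icc 1 k, rho γ lam l := by
  simp [pistar]

theorem pistar_of_lt {k j : ℕ} (hkj : k < j) : pistar γ lam k j = 0 := by
  rw [pistar, if_neg (by omega), if_neg (by omega)]

theorem pistar_zero_left (j : ℕ) : pistar γ lam 0 j = if j = 0 then 1 else 0 := by
  split_ifs with hj
  · simp [hj, pistar]
  · exact pistar_of_lt (Nat.pos_of_ne_zero hj)

theorem nuvec_zero_right (i : ℕ) : nuvec γ lam i 0 = 0 := by
  simp [nuvec]

theorem nuvec_of_lt {i j : ℕ} (hij : i < j) : nuvec γ lam i j = 0 := by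
  rw [nuvec, if_neg (by omega)]

theorem pihat_zero_left (i : ℕ) : pihat γ lam 0 i = if i = 0 then 1 else 0 := by
  by_cases hi : i = 0 <;> simp [pihat, hi]

theorem pihat_of_lt {k i : ℕ} (hki : k < i) : pihat γ lam k i = 0 := by
  rw [pihat, if_neg (by omega), if_neg (by omega), if_neg (by omega)]

theorem pihat_succ (k i : ℕ) :
    pihat γ lam (k + 1) i
      = rho γ lam (k + 1) * pihat γ lam k i
        + (1 - rho γ lam (k + 1)) * if i = k + 1 then 1 else 0 := by
  rcases Nat.lt_trichotomy i (k + 1) with hik | rfl | hik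
  · rw [if_neg hik.ne, mul_zero, add_zero]
    by_cases hi : i = 0
    · simp only [pihat, if_pos hi, prod_Icc_succ_top (Nat.le_add_left 1 k)]
      ring
    rcases Nat.lt_or_ge i k with hik' | hik'
    · simp only [pihat, if_neg hi, if_pos hik, if_pos hik',
        prod_Icc_succ_top (show i + 1 ≤ k + 1 by omega)]
      ring
    · obtain rfl : i = k := by omega
      simp [pihat, if_neg hi]
  · simp [pihat]
  · simp [pihat_of_lt hik, pihat_of_lt (show k < i by omega), hik.ne']

end

-- `Λ₂`, `P*_abs` and `P̂` as kernels on `ℕ`, so that index arithmetic stays in `ℕ`.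
noncomputable def linkKernel (γ lam : ℕ → ℝ) (i j : ℕ) : ℝ :=
  if i = 0 then (if j = 0 then 1 else 0) else nuvec γ lam i j

noncomputable def absorbedKernel (γ : ℕ → ℝ) (k j : ℕ) : ℝ :=
  if k = 0 then (if j = 0 then 1 else 0)
  else (if j = k then γ k else 0) + if j = 0 then 1 - γ k else 0

noncomputable def dualKernel (γ lam : ℕ → ℝ) (i k : ℕ) : ℝ :=
  if i = 0 then (if k = 0 then 1 else 0)
  else (if k = i then γ i else 0) + (1 - γ i) * pihat γ lam (i - 1) k

theorem linkKernel_zero_right {γ lam : ℕ → ℝ} (i : ℕ) :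
    linkKernel γ lam i 0 = if i = 0 then 1 else 0 := by
  by_cases hi : i = 0 <;> simp [linkKernel, hi, nuvec_zero_right]

namespace Interlacing

variable {r : ℕ} {γ lam : ℕ → ℝ} (h : Interlacing r γ lam)
include h

theorem lam_strictAntiOn : StrictAntiOn lam (Set.Iic r) :=
  strictAntiOn_Iic_of_succ_lt fun m hm => by
    have := h.interlace (m + 1) (by omega) hm
    simp only [Nat.add_sub_cancel] at this
    exact this.2.trans this.1

theorem lam_lt_gamma {j l : ℕ} (hj : 1 ≤ j) (hjl : j ≤ l) (hl : l ≤ r) : lam l < γ j :=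
  (h.lam_strictAntiOn.antitoneOn (Set.mem_Iic.2 (hjl.trans hl)) (Set.mem_Iic.2 hl) hjl).trans_lt
    (h.interlace j hj (hjl.trans hl)).2

theorem gamma_lt_lam {j l : ℕ} (hlj : l < j) (hj : j ≤ r) : γ j < lam l :=
  (h.interlace j (by omega) hj).1.trans_le
    (h.lam_strictAntiOn.antitoneOn (Set.mem_Iic.2 (by omega)) (Set.mem_Iic.2 (by omega))
      (by omega))

theorem gamma_lt_one {j : ℕ} (hj : 1 ≤ j) (hjr : j ≤ r) : γ j < 1 :=
  h.lam_zero ▸ h.gamma_lt_lam hj hjr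

theorem lam_lt_one {l : ℕ} (hl : 1 ≤ l) (hlr : l ≤ r) : lam l < 1 :=
  (h.lam_lt_gamma hl le_rfl hlr).trans (h.gamma_lt_one hl hlr)

theorem gamma_strictAntiOn : StrictAntiOn γ (Set.Icc 1 r) := fun _ hj _ hl hjl =>
  (h.gamma_lt_lam hjl hl.2).trans (h.lam_lt_gamma hj.1 le_rfl hj.2)

theorem rho_pos {l : ℕ} (hl : 1 ≤ l) (hlr : l ≤ r) : 0 < rho γ lam l :=
  div_pos (sub_pos.2 (h.gamma_lt_one hl hlr)) (sub_pos.2 (h.lam_lt_one hl hlr))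

theorem rho_lt_one {l : ℕ} (hl : 1 ≤ l) (hlr : l ≤ r) : rho γ lam l < 1 :=
  (div_lt_one (sub_pos.2 (h.lam_lt_one hl hlr))).2 (by linarith [(h.interlace l hl hlr).2])

theorem one_sub_gamma_sub_rho_mul {l : ℕ} (hl : 1 ≤ l) (hlr : l ≤ r) (x : ℝ) :
    1 - γ l - rho γ lam l * (1 - x) = rho γ lam l * (x - lam l) := by
  have := (sub_pos.2 (h.lam_lt_one hl hlr)).ne'
  rw [rho]
  field_simp
  ring

theorem pistar_eq_prod {j k : ℕ} (hj : 1 ≤ j) (hjk : j ≤ k) (hk : k ≤ r) :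
    pistar γ lam k j
      = (1 - rho γ lam j) *
          ∏ l ∈ (Icc 1 k).erase j, (rho γ lam l * (γ j - lam l) / (γ j - γ l)) := by
  rw [pistar, if_neg (by omega), if_pos hjk]
  congr 1
  refine prod_congr rfl fun l hl => ?_
  obtain ⟨-, hl⟩ := mem_erase.1 hl
  rw [h.one_sub_gamma_sub_rho_mul (mem_Icc.1 hl).1 ((mem_Icc.1 hl).2.trans hk)]

theorem nuvec_eq_of_le {i j : ℕ} (hj : 1 ≤ j) (hji : j ≤ i) (hi : i ≤ r) :
    nuvec γ lam i j = (1 - γ i) * pistar γ lam i j / (rho γ lam i * (γ j - lam i)) := by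
  rw [nuvec, if_pos ⟨hj, hji⟩, h.one_sub_gamma_sub_rho_mul (hj.trans hji) hi]

theorem pistar_succ_of_le {j k : ℕ} (hj : 1 ≤ j) (hjk : j ≤ k) (hk : k + 1 ≤ r) :
    pistar γ lam (k + 1) j
      = pistar γ lam k j * (rho γ lam (k + 1) * (γ j - lam (k + 1)) / (γ j - γ (k + 1))) := by
  have herase : (Icc 1 (k + 1)).erase j = insert (k + 1) ((Icc 1 k).erase j) := by
    ext l
    simp only [mem_erase, mem_Icc, mem_insert]
    omega
  rw [h.pistar_eq_prod hj (by omega) hk, h.pistar_eq_prod hj hjk (by omega), herase,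
    prod_insert (by simp)]
  ring

theorem rho_mul_sub_div_sub_pos {j l : ℕ} (hj : 1 ≤ j) (hjr : j ≤ r) (hl : 1 ≤ l) (hlr : l ≤ r)
    (hjl : l ≠ j) : 0 < rho γ lam l * (γ j - lam l) / (γ j - γ l) := by
  rw [mul_div_assoc]
  refine mul_pos (h.rho_pos hl hlr) ?_
  rcases hjl.lt_or_gt with hlj | hjl
  · exact div_pos_of_neg_of_neg (sub_neg.2 (h.gamma_lt_lam hlj hjr))
      (sub_neg.2 (h.gamma_strictAntiOn ⟨hl, hlr⟩ ⟨hj, hjr⟩ hlj))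
  · exact div_pos (sub_pos.2 (h.lam_lt_gamma hj hjl.le hlr))
      (sub_pos.2 (h.gamma_strictAntiOn ⟨hj, hjr⟩ ⟨hl, hlr⟩ hjl))

theorem pistar_pos {j k : ℕ} (hj : 1 ≤ j) (hjk : j ≤ k) (hk : k ≤ r) : 0 < pistar γ lam k j := by
  rw [h.pistar_eq_prod hj hjk hk]
  refine mul_pos (sub_pos.2 (h.rho_lt_one hj (hjk.trans hk))) (prod_pos fun l hl => ?_)
  obtain ⟨hlj, hl⟩ := mem_erase.1 hl
  exact h.rho_mul_sub_div_sub_pos hj (hjk.trans hk) (mem_Icc.1 hl).1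
    ((mem_Icc.1 hl).2.trans hk) hlj

theorem nuvec_nonneg {i : ℕ} (hi : i ≤ r) (j : ℕ) : 0 ≤ nuvec γ lam i j := by
  by_cases hij : 1 ≤ j ∧ j ≤ i
  · rw [h.nuvec_eq_of_le hij.1 hij.2 hi]
    have := h.gamma_lt_one (hij.1.trans hij.2) hi
    exact (div_pos (mul_pos (by linarith) (h.pistar_pos hij.1 hij.2 hi))
      (mul_pos (h.rho_pos (hij.1.trans hij.2) hi)
        (sub_pos.2 (h.lam_lt_gamma hij.1 hij.2 hi)))).le
  · rw [nuvec, if_neg hij]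

theorem pistar_mul_prod_one_sub_lam {j k : ℕ} (hj : j ∈ Icc 1 k) (hk : k ≤ r) :
    pistar γ lam k j * ∏ l ∈ Icc 1 k, (1 - lam l)
      = (∏ l ∈ Icc 1 k, (γ j - lam l)) * ∏ l ∈ (Icc 1 k).erase j, ((1 - γ l) / (γ j - γ l)) := by
  have hlam : ∀ l ∈ Icc 1 k, 1 - lam l ≠ 0 := fun l hl =>
    (sub_pos.2 (h.lam_lt_one (mem_Icc.1 hl).1 ((mem_Icc.1 hl).2.trans hk))).ne'
  have hprod : (∏ l ∈ (Icc 1 k).erase j, (rho γ lam l * (γ j - lam l) / (γ j - γ l))) *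
        ∏ l ∈ (Icc 1 k).erase j, (1 - lam l)
      = (∏ l ∈ (Icc 1 k).erase j, (γ j - lam l)) *
        ∏ l ∈ (Icc 1 k).erase j, ((1 - γ l) / (γ j - γ l)) := by
    rw [← prod_mul_distrib, ← prod_mul_distrib]
    refine prod_congr rfl fun l hl => ?_
    rw [rho]
    field_simp [hlam l (mem_of_mem_erase hl)]
  have hrho : (1 - rho γ lam j) * (1 - lam j) = γ j - lam j := by
    rw [rho]
    field_simp [hlam j hj]
    ring
  rw [h.pistar_eq_prod (mem_Icc.1 hj).1 (mem_Icc.1 hj).2 hk, ← mul_prod_erase _ _ hj,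
    ← mul_prod_erase _ (fun l => γ j - lam l) hj]
  linear_combination (1 - rho γ lam j) * (1 - lam j) * hprod +
    (∏ l ∈ (Icc 1 k).erase j, (γ j - lam l)) *
      (∏ l ∈ (Icc 1 k).erase j, ((1 - γ l) / (γ j - γ l))) * hrho

theorem sum_pistar {k : ℕ} (hk : k ≤ r) : ∑ j ∈ range (r + 1), pistar γ lam k j = 1 := by
  have hlam : ∀ l ∈ Icc 1 k, 1 - lam l ≠ 0 := fun l hl =>
    (sub_pos.2 (h.lam_lt_one (mem_Icc.1 hl).1 ((mem_Icc.1 hl).2.trans hk))).ne'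
  have h0 : pistar γ lam k 0 * ∏ l ∈ Icc 1 k, (1 - lam l) = ∏ l ∈ Icc 1 k, (1 - γ l) := by
    rw [pistar_zero_right, ← prod_mul_distrib]
    exact prod_congr rfl fun l hl => div_mul_cancel₀ _ (hlam l hl)
  have hinj : Set.InjOn γ (Icc 1 k : Finset ℕ) :=
    h.gamma_strictAntiOn.injOn.mono (by rw [coe_Icc]; exact Set.Icc_subset_Icc_right hk)
  rw [← sum_subset (range_subset_range.2 (Nat.succ_le_succ hk))
      fun j _ hj => pistar_of_lt (by simpa using hj),
    sum_range_succ_eq_add_sum_Icc]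
  apply mul_right_cancel₀ (prod_ne_zero_iff.2 hlam)
  rw [one_mul, add_mul, sum_mul, h0,
    sum_congr rfl fun j hj => h.pistar_mul_prod_one_sub_lam hj hk,
    ← prod_sub_sub_prod_sub_eq_sum hinj lam 1]
  ring

theorem nuvec_mul_rho_mul {i j : ℕ} (hj : 1 ≤ j) (hji : j ≤ i) (hi : i ≤ r) :
    nuvec γ lam i j * (rho γ lam i * (γ j - lam i)) = (1 - γ i) * pistar γ lam i j := by
  rw [h.nuvec_eq_of_le hj hji hi]
  exact div_mul_cancel₀ _
    (mul_pos (h.rho_pos (hj.trans hji) hi) (sub_pos.2 (h.lam_lt_gamma hj hji hi))).ne'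

theorem nuvec_mul_sub {i j : ℕ} (hj : 1 ≤ j) (hi : 1 ≤ i) (hir : i ≤ r) :
    nuvec γ lam i j * (γ j - γ i) = (1 - γ i) * pistar γ lam (i - 1) j := by
  obtain ⟨k, rfl⟩ : ∃ k, i = k + 1 := ⟨i - 1, by omega⟩
  rw [Nat.add_sub_cancel]
  rcases Nat.lt_or_ge k j with hkj | hjk
  · rw [pistar_of_lt hkj, mul_zero]
    rcases (Nat.succ_le_of_lt hkj).eq_or_lt with rfl | hkj'
    · ring
    · rw [nuvec_of_lt hkj', zero_mul]
  · have hρ := h.rho_pos (Nat.le_add_left 1 k) hir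
    have hlam := (sub_pos.2 (h.lam_lt_gamma hj (by omega) hir)).ne'
    have hγ := (sub_pos.2 (h.gamma_strictAntiOn ⟨hj, by omega⟩ ⟨Nat.le_add_left 1 k, hir⟩
      (by omega))).ne'
    rw [h.nuvec_eq_of_le hj (by omega) hir, h.pistar_succ_of_le hj hjk hir]
    field_simp

theorem pistar_succ_eq_add {k : ℕ} (hk : k + 1 ≤ r) (j : ℕ) :
    pistar γ lam (k + 1) j
      = rho γ lam (k + 1) * pistar γ lam k j + (1 - rho γ lam (k + 1)) * nuvec γ lam (k + 1) j := by
  rcases Nat.eq_zero_or_pos j with rfl | hj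
  · rw [pistar_zero_right, pistar_zero_right, prod_Icc_succ_top (Nat.le_add_left 1 k),
      nuvec_zero_right]
    ring
  rcases Nat.lt_or_ge (k + 1) j with hkj | hjk
  · rw [pistar_of_lt hkj, pistar_of_lt (by omega), nuvec_of_lt hkj]
    ring
  · have hoff := h.nuvec_mul_sub hj (Nat.le_add_left 1 k) hk
    have hdiag := h.nuvec_mul_rho_mul hj hjk hk
    have hrho : rho γ lam (k + 1) * (1 - lam (k + 1)) = 1 - γ (k + 1) :=
      div_mul_cancel₀ _ (sub_pos.2 (h.lam_lt_one (Nat.le_add_left 1 k) hk)).ne'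
    rw [Nat.add_sub_cancel] at hoff
    apply mul_left_cancel₀ (sub_pos.2 (h.gamma_lt_one (Nat.le_add_left 1 k) hk)).ne'
    linear_combination -hdiag + rho γ lam (k + 1) * hoff
      + nuvec γ lam (k + 1) j * hrho

theorem sum_nuvec {i : ℕ} (hi : 1 ≤ i) (hir : i ≤ r) :
    ∑ j ∈ range (r + 1), nuvec γ lam i j = 1 := by
  obtain ⟨k, rfl⟩ : ∃ k, i = k + 1 := ⟨i - 1, by omega⟩
  have hsum := h.sum_pistar hir
  simp only [h.pistar_succ_eq_add hir, sum_add_distrib, ← mul_sum, h.sum_pistar (by omega : k ≤ r)]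
    at hsum
  apply mul_left_cancel₀ (sub_pos.2 (h.rho_lt_one hi hir)).ne'
  linear_combination hsum

theorem sum_one_sub_gamma_mul_nuvec {i : ℕ} (hi : 1 ≤ i) (hir : i ≤ r) :
    ∑ j ∈ range (r + 1), (1 - γ j) * nuvec γ lam i j = (1 - γ i) * pistar γ lam (i - 1) 0 := by
  have hν := h.sum_nuvec hi hir
  have hπ := h.sum_pistar (by omega : i - 1 ≤ r)
  rw [sum_range_succ'] at hν hπ ⊢
  have hterm : ∀ j ∈ range r, (1 - γ (j + 1)) * nuvec γ lam i (j + 1)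
      = (1 - γ i) * nuvec γ lam i (j + 1) - (1 - γ i) * pistar γ lam (i - 1) (j + 1) :=
    fun j _ => by linear_combination -h.nuvec_mul_sub (Nat.le_add_left 1 j) hi hir
  rw [sum_congr rfl hterm, sum_sub_distrib, ← mul_sum, ← mul_sum, nuvec_zero_right] at *
  linear_combination (1 - γ i) * (hν - hπ)

theorem sum_pihat_mul_linkKernel {k : ℕ} (hk : k ≤ r) (j : ℕ) :
    ∑ i ∈ range (r + 1), pihat γ lam k i * linkKernel γ lam i j = pistar γ lam k j := by
  induction k with
  | zero =>
    simp only [pihat_zero_left, ite_mul, one_mul, zero_mul, sum_ite_eq', mem_range,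
      if_pos (Nat.succ_pos r), pistar_zero_left, linkKernel, if_true]
  | succ k ih =>
    rw [h.pistar_succ_eq_add hk, ← ih (by omega)]
    simp only [pihat_succ, add_mul, sum_add_distrib, mul_assoc, ← mul_sum, ite_mul, one_mul,
      zero_mul, sum_ite_eq', mem_range, if_pos (Nat.lt_succ_of_le hk), linkKernel,
      if_neg (Nat.succ_ne_zero k)]

theorem sum_dualKernel_mul_linkKernel {i : ℕ} (hi : 1 ≤ i) (hir : i ≤ r) (j : ℕ) :
    ∑ k ∈ range (r + 1), dualKernel γ lam i k * linkKernel γ lam k j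
      = γ i * nuvec γ lam i j + (1 - γ i) * pistar γ lam (i - 1) j := by
  simp only [dualKernel, if_neg (Nat.one_le_iff_ne_zero.1 hi), add_mul, sum_add_distrib,
    ite_mul, zero_mul, sum_ite_eq', mem_range, if_pos (Nat.lt_succ_of_le hir), mul_assoc,
    ← mul_sum, h.sum_pihat_mul_linkKernel (by omega : i - 1 ≤ r)]
  simp [linkKernel, Nat.one_le_iff_ne_zero.1 hi]

theorem sum_linkKernel_mul_absorbedKernel {i j : ℕ} (hi : 1 ≤ i) (hir : i ≤ r) (hjr : j ≤ r) :
    ∑ k ∈ range (r + 1), linkKernel γ lam i k * absorbedKernel γ k j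
      = γ i * nuvec γ lam i j + (1 - γ i) * pistar γ lam (i - 1) j := by
  have hterm : ∀ k ∈ range (r + 1), linkKernel γ lam i k * absorbedKernel γ k j
      = (if j = k then γ j * nuvec γ lam i j else 0)
        + if j = 0 then (1 - γ k) * nuvec γ lam i k else 0 := fun k _ => by
    rcases Nat.eq_zero_or_pos k with rfl | hk
    · simp only [linkKernel, if_neg (Nat.one_le_iff_ne_zero.1 hi), nuvec_zero_right, zero_mul]
      split_ifs <;> simp_all [nuvec_zero_right]
    · simp only [linkKernel, absorbedKernel, if_neg (Nat.one_le_iff_ne_zero.1 hi),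
        if_neg hk.ne']
      split_ifs <;> simp_all <;> ring
  rw [sum_congr rfl hterm, sum_add_distrib, sum_ite_eq, if_pos (mem_range.2 (by omega))]
  rcases Nat.eq_zero_or_pos j with rfl | hj
  · simp [nuvec_zero_right, h.sum_one_sub_gamma_mul_nuvec hi hir]
  · simp only [hj.ne', if_false, sum_const_zero, add_zero]
    linear_combination h.nuvec_mul_sub hj hi hir

theorem linkKernel_nonneg {i : ℕ} (hi : i ≤ r) (j : ℕ) : 0 ≤ linkKernel γ lam i j := by
  unfold linkKernel
  split_ifs
  exacts [zero_le_one, le_rfl, h.nuvec_nonneg hi j]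

theorem sum_linkKernel {i : ℕ} (hi : i ≤ r) : ∑ j ∈ range (r + 1), linkKernel γ lam i j = 1 := by
  rcases Nat.eq_zero_or_pos i with rfl | hi1
  · simp [linkKernel]
  · simp only [linkKernel, if_neg hi1.ne', h.sum_nuvec hi1 hi]

theorem sum_linkKernel_mul_absorbedKernel_eq {i j : ℕ} (hi : i ≤ r) (hj : j ≤ r) :
    ∑ k ∈ range (r + 1), linkKernel γ lam i k * absorbedKernel γ k j
      = ∑ k ∈ range (r + 1), dualKernel γ lam i k * linkKernel γ lam k j := by
  rcases Nat.eq_zero_or_pos i with rfl | hi1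
  · simp only [linkKernel, dualKernel, absorbedKernel, ↓reduceIte, ite_mul, one_mul, zero_mul,
      sum_ite_eq', mem_range, Nat.succ_pos]
  · rw [h.sum_linkKernel_mul_absorbedKernel hi1 hi hj, h.sum_dualKernel_mul_linkKernel hi1 hi]

end Interlacing

def finMatrix {R : Type*} (n : ℕ) (A : ℕ → ℕ → R) : Matrix (Fin n) (Fin n) R :=
  Matrix.of fun i j => A i j

section finMatrix

variable {R : Type*} [NonUnitalNonAssocSemiring R] {n : ℕ}

theorem finMatrix_mul (A B : ℕ → ℕ → R) :
    finMatrix n A * finMatrix n B = finMatrix n fun i j => ∑ k ∈ range n, A i k * B k j := by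
  ext i j
  exact Fin.sum_univ_eq_sum_range (fun k => A i k * B k j) n

theorem vecMul_finMatrix (v : ℕ → R) (A : ℕ → ℕ → R) :
    (fun i : Fin n => v i) ᵥ* finMatrix n A = fun j : Fin n => ∑ k ∈ range n, v k * A k j := by
  funext j
  exact Fin.sum_univ_eq_sum_range (fun k => v k * A k j) n

end finMatrix

section Bridge

variable (r : ℕ) (γ lam : ℕ → ℝ)

theorem Lambda2_eq_finMatrix : Lambda2 r γ lam = finMatrix (r + 1) (linkKernel γ lam) := rfl

theorem PstarAbs_eq_finMatrix : PstarAbs r γ lam = finMatrix (r + 1) (absorbedKernel γ) := by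
  ext i j
  rcases eq_or_ne i 0 with rfl | hi
  · simp [PstarAbs, finMatrix, absorbedKernel]
  · have hi' : (i : ℕ) ≠ 0 := Fin.val_ne_zero_iff.2 hi
    simp only [PstarAbs, Matrix.updateRow_ne hi, Pstar, finMatrix, absorbedKernel,
      Matrix.of_apply, if_neg hi', Fin.val_inj]
    split_ifs <;> simp_all

theorem PhatM_eq_finMatrix : PhatM r γ lam = finMatrix (r + 1) (dualKernel γ lam) := by
  ext i j
  simp only [PhatM, finMatrix, dualKernel, Matrix.of_apply, ← Fin.val_inj]
  split_ifs <;> first | rfl | exact (zero_add _).symm | (rw [pihat_of_lt (by omega)]; ring)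

end Bridge

theorem stmt11_general (r : ℕ) (γ lam : ℕ → ℝ)
    (hlam0 : lam 0 = 1)
    (hinter : ∀ i : ℕ, 1 ≤ i → i ≤ r → lam (i - 1) > γ i ∧ γ i > lam i) :
    (∀ i j, 0 ≤ Lambda2 r γ lam i j) ∧
    (∀ i, ∑ j, Lambda2 r γ lam i j = 1) ∧
    (Lambda2 r γ lam * PstarAbs r γ lam = PhatM r γ lam * Lambda2 r γ lam) ∧
    ((fun i : Fin (r + 1) => pistar γ lam r i.val)
      = (fun i : Fin (r + 1) => pihat γ lam r i.val) ᵥ* Lambda2 r γ lam) ∧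
    (∀ i : Fin (r + 1), Lambda2 r γ lam i 0 = if i = 0 then 1 else 0) := by
  have h : Interlacing r γ lam := ⟨hlam0, hinter⟩
  rw [Lambda2_eq_finMatrix, PstarAbs_eq_finMatrix, PhatM_eq_finMatrix, finMatrix_mul,
    finMatrix_mul, vecMul_finMatrix]
  refine ⟨fun i j => h.linkKernel_nonneg (Nat.lt_succ_iff.1 i.2) j, fun i => ?_, ?_, ?_,
    fun i => ?_⟩
  · exact (Fin.sum_univ_eq_sum_range (linkKernel γ lam i) (r + 1)).trans
      (h.sum_linkKernel (Nat.lt_succ_iff.1 i.2))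
  · ext i j
    exact h.sum_linkKernel_mul_absorbedKernel_eq (Nat.lt_succ_iff.1 i.2) (Nat.lt_succ_iff.1 j.2)
  · funext j
    exact (h.sum_pihat_mul_linkKernel le_rfl j).symm
  · change linkKernel γ lam i 0 = _
    simp only [linkKernel_zero_right, Fin.val_eq_zero_iff]

/-- `Λ₂` is a stochastic matrix, `Λ₂ P*_abs = P̂ Λ₂`, `π* = π̂ Λ₂`, and
`Λ₂ δ_0ᵀ = δ_0ᵀ`: the chains `(π*, P*_abs)` and `(π̂, P̂)` are intertwined by the link
`Λ₂`. -/
theorem stmt11 (r : ℕ) (hr : 1 ≤ r) (γ lam : ℕ → ℝ)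
    (hlam0 : lam 0 = 1)
    (hinter : ∀ i : ℕ, 1 ≤ i → i ≤ r → lam (i - 1) > γ i ∧ γ i > lam i)
    (hlamr : 0 ≤ lam r) :
    (∀ i j, 0 ≤ Lambda2 r γ lam i j) ∧
    (∀ i, ∑ j, Lambda2 r γ lam i j = 1) ∧
    (Lambda2 r γ lam * PstarAbs r γ lam = PhatM r γ lam * Lambda2 r γ lam) ∧
    ((fun i : Fin (r + 1) => pistar γ lam r i.val)
      = (fun i : Fin (r + 1) => pihat γ lam r i.val) ᵥ* Lambda2 r γ lam) ∧
    (∀ i : Fin (r + 1), Lambda2 r γ lam i 0 = if i = 0 then 1 else 0) :=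
  stmt11_general r γ lam hlam0 hinter
end
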